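/- arXiv:2508.03568 — 3 statements merged into one kernel-verified Lean document; each statement's English description precedes it below -/
import Mathlib

section
/- Theorem A (quasi-isometry): if f, g ∈ Λ are both homogeneous of degree d, then ⟨D f, D g⟩ = d · ⟨f, g⟩. -/
/-! Both sides are bilinear, so it suffices to take `f = p_λ`, `g = p_μ` with `|λ| = |μ|`.
Since `D p_λ = Σₙ n λₙ p_{λ - eₙ}`, the pairing `⟨D p_λ, D p_μ⟩` only sees pairs `(n, n')` with
`λ - eₙ = μ - e_{n'}`; comparing weights gives `n = n'` and then `λ = μ`. On the diagonal,
`n² λₙ² z_{λ - eₙ} = n λₙ z_λ`, and summing over `n` gives `|λ| z_λ`. -/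

open MvPolynomial

/-- The ring of symmetric functions in the power-sum model:
`Λ = ℚ[p₁, p₂, …]` with the variable indexed by `n : ℕ+` being the power sum `pₙ`. -/
abbrev Λ : Type := MvPolynomial ℕ+ ℚ

/-- `Dₙ = n · ∂/∂pₙ`. -/
noncomputable def Dn (n : ℕ+) : Λ →ₗ[ℚ] Λ :=
  (n : ℚ) • (pderiv n : Derivation ℚ Λ Λ).toLinearMap

/-- `D = Σₙ Dₙ` (on each polynomial only finitely many `Dₙ` are nonzero). -/
noncomputable def D (f : Λ) : Λ := ∑ᶠ n : ℕ+, Dn n f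

/-- The weight `|λ| = Σₙ n·(λ n)` of a power-sum monomial exponent. -/
def wt (l : ℕ+ →₀ ℕ) : ℕ := l.sum fun n k => (n : ℕ) * k

/-- `f` is homogeneous of degree `d` if every monomial in its support has weight `d`. -/
def IsHomog (d : ℕ) (f : Λ) : Prop := ∀ l ∈ f.support, wt l = d

/-- `z_λ = Πₙ n^{λ n} · (λ n)!`. -/
noncomputable def zlam (l : ℕ+ →₀ ℕ) : ℚ :=
  l.prod fun n k => (n : ℚ) ^ k * (Nat.factorial k : ℚ)

/-- The Hall inner product: the unique bilinear form with `⟨p_λ, p_μ⟩ = δ_{λμ} z_λ`. -/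
noncomputable def hall (f g : Λ) : ℚ := ∑ l ∈ f.support, f.coeff l * g.coeff l * zlam l

open Finsupp

lemma wt_add (l m : ℕ+ →₀ ℕ) : wt (l + m) = wt l + wt m :=
  sum_add_index' (fun _ => mul_zero _) fun _ _ _ => mul_add _ _ _

lemma wt_single (n : ℕ+) (k : ℕ) : wt (single n k) = n * k :=
  sum_single_index (mul_zero _)

lemma tsub_single_add_single {l : ℕ+ →₀ ℕ} {n : ℕ+} (hn : n ∈ l.support) :
    l - single n 1 + single n 1 = l :=
  tsub_add_cancel_of_le (single_le_iff.2 (Nat.one_le_iff_ne_zero.2 (mem_support_iff.1 hn)))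

lemma wt_tsub_single_add {l : ℕ+ →₀ ℕ} {n : ℕ+} (hn : n ∈ l.support) :
    wt (l - single n 1) + n = wt l := by
  conv_rhs => rw [← tsub_single_add_single hn]
  rw [wt_add, wt_single, mul_one]

lemma zlam_add_single (l : ℕ+ →₀ ℕ) (n : ℕ+) :
    zlam (l + single n 1) = n * (l n + 1) * zlam l := by
  have h0 : ∀ i : ℕ+, (i : ℚ) ^ 0 * (Nat.factorial 0 : ℚ) = 1 := by simp
  unfold zlam
  rw [← mul_prod_erase' _ n _ h0, ← mul_prod_erase' l n _ h0, erase_add, erase_single, add_zero]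
  simp only [Finsupp.coe_add, Pi.add_apply, single_eq_same, pow_succ, Nat.factorial_succ]
  push_cast
  ring

lemma zlam_eq_mul_zlam_tsub_single {l : ℕ+ →₀ ℕ} {n : ℕ+} (hn : n ∈ l.support) :
    zlam l = n * l n * zlam (l - single n 1) := by
  have hln : (l - single n 1 : ℕ+ →₀ ℕ) n + 1 = l n := by
    simpa using DFunLike.congr_fun (tsub_single_add_single hn) n
  conv_lhs => rw [← tsub_single_add_single hn]
  rw [zlam_add_single, ← hln, Nat.cast_add_one]

lemma eq_of_tsub_single_eq {l m : ℕ+ →₀ ℕ} {n n' : ℕ+} (hn : n ∈ l.support)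
    (hn' : n' ∈ m.support) (hwt : wt l = wt m) (h : l - single n 1 = m - single n' 1) :
    n = n' ∧ l = m := by
  have hnn' : n = n' := by
    have := wt_tsub_single_add hn
    rw [h, hwt, ← wt_tsub_single_add hn'] at this
    exact PNat.coe_injective (by omega)
  subst hnn'
  exact ⟨rfl, by rw [← tsub_single_add_single hn, h, tsub_single_add_single hn']⟩

lemma hall_eq_sum_of_support_subset (f g : Λ) {s : Finset (ℕ+ →₀ ℕ)} (hs : f.support ⊆ s) :
    hall f g = ∑ l ∈ s, f.coeff l * g.coeff l * zlam l :=
  Finset.sum_subset hs fun l _ hl => by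
    rw [MvPolynomial.notMem_support_iff.1 hl, zero_mul, zero_mul]

lemma hall_add_left (f₁ f₂ g : Λ) : hall (f₁ + f₂) g = hall f₁ g + hall f₂ g := by
  rw [hall_eq_sum_of_support_subset _ g MvPolynomial.support_add,
    hall_eq_sum_of_support_subset f₁ g Finset.subset_union_left,
    hall_eq_sum_of_support_subset f₂ g Finset.subset_union_right, ← Finset.sum_add_distrib]
  simp only [coeff_add, add_mul]

lemma hall_add_right (f g₁ g₂ : Λ) : hall f (g₁ + g₂) = hall f g₁ + hall f g₂ := by
  simp only [hall, coeff_add, mul_add, add_mul, Finset.sum_add_distrib]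

lemma hall_sum_left {ι : Type*} (s : Finset ι) (F : ι → Λ) (g : Λ) :
    hall (∑ i ∈ s, F i) g = ∑ i ∈ s, hall (F i) g :=
  map_sum (AddMonoidHom.mk' (hall · g) fun f₁ f₂ => hall_add_left f₁ f₂ g) F s

lemma hall_sum_right {ι : Type*} (s : Finset ι) (f : Λ) (G : ι → Λ) :
    hall f (∑ i ∈ s, G i) = ∑ i ∈ s, hall f (G i) :=
  map_sum (AddMonoidHom.mk' (hall f) (hall_add_right f)) G s

lemma hall_monomial_monomial (l m : ℕ+ →₀ ℕ) (a b : ℚ) :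
    hall (monomial l a) (monomial m b) = if l = m then a * b * zlam l else 0 := by
  rw [hall_eq_sum_of_support_subset _ _ support_monomial_subset, Finset.sum_singleton,
    coeff_monomial, coeff_monomial, if_pos rfl]
  split_ifs <;> simp_all

lemma Dn_monomial (n : ℕ+) (l : ℕ+ →₀ ℕ) (c : ℚ) :
    Dn n (monomial l c) = monomial (l - single n 1) (c * l n * n) := by
  simp only [Dn, LinearMap.smul_apply, Derivation.coeFn_coe, pderiv_monomial, smul_monomial,
    smul_eq_mul]
  congr 1
  ring

lemma D_monomial (l : ℕ+ →₀ ℕ) (c : ℚ) :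
    D (monomial l c) = ∑ n ∈ l.support, monomial (l - single n 1) (c * l n * n) := by
  rw [D, finsum_eq_sum_of_support_subset _ (s := l.support) fun n hn => ?_]
  · exact Finset.sum_congr rfl fun n _ => Dn_monomial n l c
  · by_contra hnl
    simp [Dn_monomial, Finsupp.notMem_support_iff.1 hnl] at hn

lemma support_Dn_finite (f : Λ) : (Function.support fun n => Dn n f).Finite := by
  refine f.vars.finite_toSet.subset fun n hn => ?_
  by_contra hnf
  simp [Dn, pderiv_eq_zero_of_notMem_vars hnf] at hn

lemma D_add (f g : Λ) : D (f + g) = D f + D g := by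
  simp only [D, map_add, finsum_add_distrib (support_Dn_finite f) (support_Dn_finite g)]

lemma D_sum {ι : Type*} (s : Finset ι) (F : ι → Λ) : D (∑ i ∈ s, F i) = ∑ i ∈ s, D (F i) :=
  map_sum (AddMonoidHom.mk' D D_add) F s

lemma cast_wt (l : ℕ+ →₀ ℕ) : (wt l : ℚ) = ∑ n ∈ l.support, (n : ℚ) * l n := by
  simp [wt, Finsupp.sum]

lemma hall_D_monomial_D_monomial {l m : ℕ+ →₀ ℕ} (hwt : wt l = wt m) (a b : ℚ) :
    hall (D (monomial l a)) (D (monomial m b)) = wt l * hall (monomial l a) (monomial m b) := by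
  rw [D_monomial, D_monomial, hall_sum_left, hall_monomial_monomial]
  simp only [hall_sum_right, hall_monomial_monomial]
  have inner : ∀ n ∈ l.support, (∑ n' ∈ m.support, if l - single n 1 = m - single n' 1 then
      a * l n * n * (b * m n' * n') * zlam (l - single n 1) else 0) =
      if l = m then n * l n * (a * b * zlam l) else 0 := by
    intro n hn
    split_ifs with hlm
    · subst hlm
      rw [Finset.sum_eq_single_of_mem n hn fun n' hn' hne =>
        if_neg fun h => hne (eq_of_tsub_single_eq hn hn' rfl h).1.symm,
        if_pos rfl, zlam_eq_mul_zlam_tsub_single hn]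
      ring
    · exact Finset.sum_eq_zero fun n' hn' =>
        if_neg fun h => hlm (eq_of_tsub_single_eq hn hn' hwt h).2
  rw [Finset.sum_congr rfl inner]
  split_ifs
  · rw [cast_wt, Finset.sum_mul]
  · simp

/-- Theorem A (quasi-isometry): for `f, g` homogeneous of degree `d`,
`⟨D f, D g⟩ = d ⟨f, g⟩`. -/
theorem D_quasi_isometry (d : ℕ) (f g : Λ) (hf : IsHomog d f) (hg : IsHomog d g) :
    hall (D f) (D g) = (d : ℚ) * hall f g := by
  rw [← support_sum_monomial_coeff f, ← support_sum_monomial_coeff g, D_sum, D_sum]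
  simp only [hall_sum_left, hall_sum_right, Finset.mul_sum]
  refine Finset.sum_congr rfl fun m hm => Finset.sum_congr rfl fun l hl => ?_
  rw [hall_D_monomial_D_monomial ((hf l hl).trans (hg m hm).symm), hf l hl]
end

section
/- For every d > 0, the derivation D acts injectively on the degree-d homogeneous component of Λ: if f ∈ Λ is homogeneous of degree d > 0 and D f = 0, then f = 0. -/
open MvPolynomial

/-!
`Dₙ` lowers the weight of a monomial by exactly `n`. So if `f` is homogeneous of
degree `d` and `p_λ` has weight `w`, the coefficient of `p_λ` in `D f` comes from the single
operator `D_{d-w}`. Taking `p_μ` in the support of `f` and `n` with `μ n > 0`, the coefficient of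
`p_{μ - eₙ}` in `D f` is `n · μ n · [p_μ] f ≠ 0`.
-/

lemma wt_eq_weight : wt = Finsupp.weight (fun n : ℕ+ => (n : ℕ)) := by
  ext l
  exact Finsupp.sum_congr fun n _ => mul_comm _ _

@[simp]
lemma wt_zero : wt 0 = 0 := by
  rw [wt_eq_weight, map_zero]

lemma wt_add_single_one (l : ℕ+ →₀ ℕ) (n : ℕ+) : wt (l + Finsupp.single n 1) = wt l + n := by
  rw [wt_eq_weight, map_add, Finsupp.weight_single, smul_eq_mul, one_mul]

lemma coeff_Dn (n : ℕ+) (l : ℕ+ →₀ ℕ) (f : Λ) :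
    coeff l (Dn n f) = n * (l n + 1) * coeff (l + Finsupp.single n 1) f := by
  simp only [Dn, LinearMap.smul_apply, Derivation.coeFn_coe, coeff_smul, coeff_pderiv,
    smul_eq_mul]
  ring

lemma coeff_Dn_tsub_single (f : Λ) {m : ℕ+ →₀ ℕ} {n : ℕ+} (hn : 0 < m n) :
    coeff (m - Finsupp.single n 1) (Dn n f) = n * m n * coeff m f := by
  have hle : Finsupp.single n 1 ≤ m := Finsupp.single_le_iff.mpr hn
  rw [coeff_Dn, tsub_add_cancel_of_le hle, Finsupp.tsub_apply, Finsupp.single_eq_same,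
    Nat.cast_sub hn, Nat.cast_one, sub_add_cancel]

lemma Dn_eq_zero_of_notMem_vars {n : ℕ+} {f : Λ} (h : n ∉ f.vars) : Dn n f = 0 := by
  simp [Dn, pderiv_eq_zero_of_notMem_vars h]

lemma coeff_D (f : Λ) (l : ℕ+ →₀ ℕ) : coeff l (D f) = ∑ᶠ n, coeff l (Dn n f) := by
  have hfin : (Function.support fun n => Dn n f).Finite :=
    f.vars.finite_toSet.subset fun n hn => by_contra fun hv => hn (Dn_eq_zero_of_notMem_vars hv)
  exact (lcoeff ℚ l).toAddMonoidHom.map_finsum hfin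

namespace IsHomog

variable {d : ℕ} {f : Λ}

lemma coeff_Dn_eq_zero (hf : IsHomog d f) {l : ℕ+ →₀ ℕ} {n : ℕ+} (h : wt l + n ≠ d) :
    coeff l (Dn n f) = 0 := by
  have hz : coeff (l + Finsupp.single n 1) f = 0 :=
    notMem_support_iff.mp fun hmem => h (wt_add_single_one l n ▸ hf _ hmem)
  rw [coeff_Dn, hz, mul_zero]

lemma coeff_D (hf : IsHomog d f) {l : ℕ+ →₀ ℕ} {n : ℕ+} (h : wt l + n = d) :
    coeff l (D f) = coeff l (Dn n f) := by
  rw [_root_.coeff_D, finsum_eq_single _ n]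
  intro n' hn'
  apply hf.coeff_Dn_eq_zero
  intro h'
  exact hn' (PNat.coe_injective (by omega))

end IsHomog

/-- `D` acts injectively on the degree-`d` homogeneous component for `d > 0`. -/
theorem D_injective_on_homog (d : ℕ) (hd : 0 < d) (f : Λ) (hf : IsHomog d f)
    (h : D f = 0) : f = 0 := by
  by_contra hne
  obtain ⟨m, hm⟩ := support_nonempty.mpr hne
  have hm0 : m ≠ 0 := by
    rintro rfl
    exact hd.ne (wt_zero ▸ hf 0 hm)
  obtain ⟨n, hn⟩ := Finsupp.support_nonempty_iff.mpr hm0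
  have hmn : 0 < m n := Nat.pos_of_ne_zero (Finsupp.mem_support_iff.mp hn)
  have hwt : wt (m - Finsupp.single n 1) + n = d := by
    rw [← wt_add_single_one, tsub_add_cancel_of_le (Finsupp.single_le_iff.mpr hmn), hf m hm]
  have hcoeff := congrArg (coeff (m - Finsupp.single n 1)) h
  rw [hf.coeff_D hwt, coeff_Dn_tsub_single f hmn, coeff_zero] at hcoeff
  have hmf : coeff m f ≠ 0 := mem_support_iff.mp hm
  have hn0 : ((n : ℕ) : ℚ) ≠ 0 := Nat.cast_ne_zero.mpr n.ne_zero
  have hmn0 : (m n : ℚ) ≠ 0 := Nat.cast_ne_zero.mpr hmn.ne'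
  exact mul_ne_zero (mul_ne_zero hn0 hmn0) hmf hcoeff
end

section
/- The map D : Λ → Λ is surjective: for every g ∈ Λ there exists f ∈ Λ with D f = g. -/
open MvPolynomial

/-!
`D` is the derivation of `ℚ[p₁, p₂, …]` with `D pₙ = n`. It is locally nilpotent: `D² pₙ = 0`, and
by the Leibniz rule the elements killed by a power of a derivation form a subalgebra. It also has
the slice `p₁`, i.e. `D p₁ = 1`. For a locally nilpotent derivation `δ` with a slice `s`, the
terms of `f = ∑ₖ (-1)ᵏ sᵏ⁺¹ / (k+1)! · δᵏ g` telescope under `δ`, so that `δ f = g`.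
-/

open Finset Nat

namespace Derivation

section

variable {R A M : Type*} [CommSemiring R] [CommSemiring A] [Algebra R A]
  [AddCommMonoid M] [Module A M] [Module R M]

theorem finsetSum_apply {ι : Type*} (s : Finset ι) (D : ι → Derivation R A M) (a : A) :
    (∑ i ∈ s, D i) a = ∑ i ∈ s, D i a := by
  rw [← coeFnAddMonoidHom_apply, map_sum, Finset.sum_apply]
  rfl

end

section

variable {R A : Type*} [CommSemiring R] [CommSemiring A] [Algebra R A] (δ : Derivation R A A)

theorem iterate_apply_mul (n : ℕ) (a b : A) :
    δ^[n] (a * b) = ∑ ij ∈ antidiagonal n, n.choose ij.1 • (δ^[ij.1] a * δ^[ij.2] b) := by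
  induction n with
  | zero => simp
  | succ n ih =>
    rw [sum_antidiagonal_choose_succ_nsmul (M := A) (fun i j => δ^[i] a * δ^[j] b) n]
    simp only [Function.iterate_succ_apply', ih, map_sum, map_nsmul, leibniz, smul_eq_mul,
      smul_add, sum_add_distrib]
    congr 1
    refine sum_congr rfl fun ⟨i, j⟩ hij => ?_
    rw [n.choose_symm_of_eq_add (HasAntidiagonal.mem_antidiagonal.1 hij).symm, mul_comm]

theorem iterate_eq_zero_of_le {a : A} {m n : ℕ} (ha : δ^[m] a = 0) (hmn : m ≤ n) :
    δ^[n] a = 0 := by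
  obtain ⟨k, rfl⟩ := Nat.exists_eq_add_of_le hmn
  rw [add_comm, Function.iterate_add_apply, ha, iterate_map_zero]

theorem iterate_add_apply_mul_eq_zero {a b : A} {m n : ℕ} (ha : δ^[m] a = 0)
    (hb : δ^[n] b = 0) : δ^[m + n] (a * b) = 0 := by
  rw [iterate_apply_mul]
  refine sum_eq_zero fun ij hij => ?_
  rcases le_or_gt m ij.1 with hm | hm
  · rw [δ.iterate_eq_zero_of_le ha hm, zero_mul, smul_zero]
  · have hn : n ≤ ij.2 := by rw [HasAntidiagonal.mem_antidiagonal] at hij; omega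
    rw [δ.iterate_eq_zero_of_le hb hn, mul_zero, smul_zero]

end

theorem exists_apply_eq_of_iterate_eq_zero {A : Type*} [CommRing A] [Algebra ℚ A]
    (δ : Derivation ℚ A A) {s : A} (hs : δ s = 1) {g : A} {N : ℕ} (hg : δ^[N] g = 0) :
    ∃ f, δ f = g := by
  set t : ℕ → A := fun k => ((-1) ^ k / k ! : ℚ) • (s ^ k * δ^[k] g) with ht
  have hterm (k : ℕ) :
      δ (((-1) ^ k / (k + 1)! : ℚ) • (s ^ (k + 1) * δ^[k] g)) = t k - t (k + 1) := by
    have hfac : ((-1) ^ k / (k + 1)! : ℚ) * (k + 1) = (-1) ^ k / k ! := by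
      rw [Nat.factorial_succ]; push_cast; field_simp
    have hsign : ((-1) ^ (k + 1) / (k + 1)! : ℚ) = -((-1) ^ k / (k + 1)!) := by ring
    rw [map_smul, leibniz, leibniz_pow, hs, ht]
    simp only [Function.iterate_succ_apply', hsign, ← hfac, smul_eq_mul, nsmul_eq_mul,
      add_tsub_cancel_right, mul_one]
    simp only [Algebra.smul_def, map_mul, map_neg, map_add, map_one, _root_.map_natCast]
    push_cast
    ring
  refine ⟨∑ k ∈ range N, ((-1) ^ k / (k + 1)! : ℚ) • (s ^ (k + 1) * δ^[k] g), ?_⟩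
  rw [map_sum, sum_congr rfl fun k _ => hterm k, sum_range_sub']
  simp [t, hg]

end Derivation

theorem MvPolynomial.exists_iterate_derivation_eq_zero {σ R : Type*} [CommSemiring R]
    (δ : Derivation R (MvPolynomial σ R) (MvPolynomial σ R)) (hX : ∀ i, ∃ n, δ^[n] (X i) = 0)
    (f : MvPolynomial σ R) : ∃ n, δ^[n] f = 0 := by
  induction f using MvPolynomial.induction_on with
  | C a => exact ⟨1, by simp⟩
  | add p q hp hq =>
    obtain ⟨m, hm⟩ := hp
    obtain ⟨n, hn⟩ := hq
    refine ⟨max m n, ?_⟩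
    rw [iterate_map_add, δ.iterate_eq_zero_of_le hm (le_max_left m n),
      δ.iterate_eq_zero_of_le hn (le_max_right m n), add_zero]
  | mul_X p i hp =>
    obtain ⟨m, hm⟩ := hp
    obtain ⟨n, hn⟩ := hX i
    exact ⟨m + n, δ.iterate_add_apply_mul_eq_zero hm hn⟩

theorem D_eq_mkDerivation (f : Λ) : D f = mkDerivation ℚ (fun n : ℕ+ => C (n : ℚ)) f := by
  have hsupp : (Function.support fun n => Dn n f) ⊆ f.vars := fun n hn => by
    by_contra h
    exact hn (by simp [Dn, pderiv_eq_zero_of_notMem_vars h])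
  rw [D, finsum_eq_sum_of_support_subset _ hsupp]
  trans (∑ n ∈ f.vars, (n : ℚ) • pderiv n : Derivation ℚ Λ Λ) f
  · rw [Derivation.finsetSum_apply]
    rfl
  refine derivation_eq_of_forall_mem_vars fun i hi => ?_
  rw [Derivation.finsetSum_apply, sum_eq_single i, mkDerivation_X]
  · rw [Derivation.smul_apply, pderiv_X_self, C_eq_smul_one]
  · intro n _ hni
    rw [Derivation.smul_apply, pderiv_X_of_ne (Ne.symm hni), smul_zero]
  · exact absurd hi

/-- `D : Λ → Λ` is surjective. -/
theorem D_surjective : ∀ g : Λ, ∃ f : Λ, D f = g := by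
  intro g
  obtain ⟨N, hN⟩ := exists_iterate_derivation_eq_zero (mkDerivation ℚ fun n : ℕ+ => C (n : ℚ))
    (fun i => ⟨2, by simp⟩) g
  obtain ⟨f, hf⟩ := Derivation.exists_apply_eq_of_iterate_eq_zero _ (s := X 1) (by simp) hN
  exact ⟨f, by rw [D_eq_mkDerivation, hf]⟩
end
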